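/- Let G be a finite group, p a prime, and x a p-element of G. If the conjugacy class size |G : C_G(x)| is a power of p, then x lies in O_p(G), the largest normal p-subgroup of G. -/
import Mathlib


open Subgroup

/-- `n` is a power of some prime (`1` counts as a power of every prime). -/
def IsPrimePower (n : ℕ) : Prop := ∃ q k : ℕ, q.Prime ∧ n = q ^ k

/-- The index `|G : C_G(x)|` of `x` in `G`, i.e. the size of the conjugacy class of `x`. -/
noncomputable def idx {G : Type*} [Group G] (x : G) : ℕ := (Subgroup.centralizer {x}).index

/-- `x` is a `p`-element: its order is a power of `p`. -/
def IsPElem {G : Type*} [Group G] (p : ℕ) (x : G) : Prop := ∃ n : ℕ, orderOf x = p ^ n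

/-- `G = AB` is a factorisation of `G` by the subgroups `A` and `B`. -/
def IsFact {G : Type*} [Group G] (A B : Subgroup G) : Prop :=
  ∀ g : G, ∃ a ∈ A, ∃ b ∈ B, g = a * b

/-- `O_p(G)`: the largest normal `p`-subgroup of `G`. -/
def pCore (p : ℕ) (G : Type*) [Group G] : Subgroup G :=
  sSup {H : Subgroup G | H.Normal ∧ IsPGroup p H}

/-- `O_{p'}(G)`: the largest normal `p'`-subgroup of `G`. -/
def pPrimeCore (p : ℕ) (G : Type*) [Group G] : Subgroup G :=
  sSup {H : Subgroup G | H.Normal ∧ ∀ x : H, ¬ p ∣ orderOf (x : G)}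

/-- The Fitting subgroup `F(G)`: the largest normal nilpotent subgroup of `G`. -/
def fitting (G : Type*) [Group G] : Subgroup G :=
  sSup {H : Subgroup G | H.Normal ∧ Group.IsNilpotent H}

theorem normal_sSup {G : Type*} [Group G] (S : Set (Subgroup G))
    (hS : ∀ H ∈ S, H.Normal) : (sSup S).Normal := by
  have key : sSup S = closure (⋃ H : S, ((H : Subgroup G) : Set G)) := by
    rw [sSup_eq_iSup', iSup_eq_closure]
  constructor
  intro n hn g
  rw [key] at hn ⊢
  induction hn using closure_induction with
  | mem x hx =>
      apply Subgroup.subset_closure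
      obtain ⟨H, hxH⟩ := Set.mem_iUnion.1 hx
      exact Set.mem_iUnion.2 ⟨H, (hS H H.2).conj_mem x hxH g⟩
  | one => simpa using one_mem _
  | mul x y hx hy ihx ihy =>
      have h : g * (x * y) * g⁻¹ = (g * x * g⁻¹) * (g * y * g⁻¹) := by group
      rw [h]; exact mul_mem ihx ihy
  | inv x hx ihx =>
      have h : g * x⁻¹ * g⁻¹ = (g * x * g⁻¹)⁻¹ := by group
      rw [h]; exact inv_mem ihx

instance fitting_normal (G : Type*) [Group G] : (fitting G).Normal :=
  normal_sSup _ (fun _ h => h.1)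

instance pCore_normal (p : ℕ) (G : Type*) [Group G] : (pCore p G).Normal :=
  normal_sSup _ (fun _ h => h.1)

instance pPrimeCore_normal (p : ℕ) (G : Type*) [Group G] : (pPrimeCore p G).Normal :=
  normal_sSup _ (fun _ h => h.1)

/-- Wielandt's lemma: a `p`-element of `p`-power index lies in `O_p(G)`. -/
theorem wielandt {G : Type*} [Group G] [Finite G] {p : ℕ} (hp : p.Prime) (x : G)
    (hx : IsPElem p x) (k : ℕ) (hidx : idx x = p ^ k) : x ∈ pCore p G := by
  haveI : Fact p.Prime := ⟨hp⟩
  set C := Subgroup.centralizer ({x} : Set G) with hC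
  -- x generates a p-group, so lies in some Sylow p-subgroup
  obtain ⟨n0, hn0⟩ := hx
  have hzp : IsPGroup p (Subgroup.zpowers x) := by
    rw [IsPGroup.iff_card]
    exact ⟨n0, by rw [Nat.card_zpowers, hn0]⟩
  obtain ⟨P, hxP⟩ := hzp.exists_le_sylow
  have hxmemP : x ∈ (P : Subgroup G) := hxP (Subgroup.mem_zpowers x)
  -- cardinality bookkeeping
  set n := (Nat.card G).factorization p with hn
  have hcardP : Nat.card (P : Subgroup G) = p ^ n := P.card_eq_multiplicity
  have hGpos : Nat.card G ≠ 0 := Nat.card_pos.ne'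
  -- the map P ⧸ (C.subgroupOf P) → G ⧸ C
  let f : (P : Subgroup G) ⧸ (C.subgroupOf P) → G ⧸ C :=
    Quotient.map' (fun u => (u : G)) (fun a b hab => by
      rw [QuotientGroup.leftRel_apply] at hab ⊢
      simpa [Subgroup.mem_subgroupOf] using hab)
  have hfinj : Function.Injective f := by
    intro a b
    induction a using Quotient.inductionOn' with | h a =>
    induction b using Quotient.inductionOn' with | h b =>
    intro hab
    have : ((a : G)⁻¹ * b : G) ∈ C := by
      rwa [show f (Quotient.mk'' a) = QuotientGroup.mk (a : G) from rfl,
        show f (Quotient.mk'' b) = QuotientGroup.mk (b : G) from rfl,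
        QuotientGroup.eq] at hab
    exact Quotient.sound' (QuotientGroup.leftRel_apply.2 (by
      simpa [Subgroup.mem_subgroupOf] using this))
  -- index of C ∩ P in P is p ^ j
  have hidx_mul : (C.subgroupOf P).index * Nat.card (C.subgroupOf P) =
      Nat.card (P : Subgroup G) := Subgroup.index_mul_card _
  obtain ⟨j, hjn, hj⟩ : ∃ j ≤ n, (C.subgroupOf P).index = p ^ j := by
    have : (C.subgroupOf P).index ∣ p ^ n := by
      rw [← hcardP]; exact Dvd.intro _ hidx_mul
    exact (Nat.dvd_prime_pow hp).1 this
  have hcardsub : Nat.card (C.subgroupOf P) = p ^ (n - j) := by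
    have h1 : p ^ j * Nat.card (C.subgroupOf P) = p ^ n := by
      rw [← hj, hidx_mul, hcardP]
    have h2 : p ^ j * Nat.card (C.subgroupOf P) = p ^ j * p ^ (n - j) := by
      rw [h1, ← pow_add, Nat.add_sub_cancel' hjn]
    exact Nat.eq_of_mul_eq_mul_left (pow_pos hp.pos j) h2
  -- card (C.subgroupOf P) divides card C
  have hdvdC : Nat.card (C.subgroupOf P) ∣ Nat.card C := by
    have e1 : C.subgroupOf P = (C ⊓ P).subgroupOf P :=
      (Subgroup.inf_subgroupOf_right C P).symm
    have e2 : Nat.card (C.subgroupOf P) = Nat.card (C ⊓ (P : Subgroup G) : Subgroup G) := by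
      rw [e1]; exact Nat.card_congr (Subgroup.subgroupOfEquivOfLe inf_le_right).toEquiv
    rw [e2]
    exact Subgroup.card_dvd_of_le inf_le_left
  -- k ≤ j
  have hCk : C.index = p ^ k := hidx
  have hCmul : C.index * Nat.card C = Nat.card G := Subgroup.index_mul_card _
  have hkj : k ≤ j := by
    have hdvdG : p ^ (n - j + k) ∣ Nat.card G := by
      calc p ^ (n - j + k) = p ^ k * p ^ (n - j) := by ring
        _ ∣ p ^ k * Nat.card C := mul_dvd_mul_left _ (hcardsub ▸ hdvdC)
        _ = Nat.card G := by rw [← hCk, hCmul]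
    have : n - j + k ≤ n := (Nat.Prime.pow_dvd_iff_le_factorization hp hGpos).1 hdvdG
    omega
  -- j ≤ k from the injection f
  have hjk : j ≤ k := by
    have hcards : Nat.card ((P : Subgroup G) ⧸ (C.subgroupOf P)) ≤ Nat.card (G ⧸ C) :=
      Nat.card_le_card_of_injective f hfinj
    have e1 : Nat.card ((P : Subgroup G) ⧸ (C.subgroupOf P)) = p ^ j := hj
    have e2 : Nat.card (G ⧸ C) = p ^ k := hCk
    rw [e1, e2] at hcards
    exact (Nat.pow_le_pow_iff_right hp.one_lt).1 hcards
  have hjek : j = k := le_antisymm hjk hkj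
  -- f is surjective
  have hfsurj : Function.Surjective f := by
    have hcards : Nat.card ((P : Subgroup G) ⧸ (C.subgroupOf P)) = Nat.card (G ⧸ C) := by
      rw [show Nat.card ((P : Subgroup G) ⧸ (C.subgroupOf P)) = p ^ j from hj,
        show Nat.card (G ⧸ C) = p ^ k from hCk, hjek]
    exact ((Nat.bijective_iff_injective_and_card f).2 ⟨hfinj, hcards⟩).surjective
  -- every conjugate of x lies in P
  have key : ∀ g : G, g * x * g⁻¹ ∈ (P : Subgroup G) := by
    intro g
    obtain ⟨q, hq⟩ := hfsurj (QuotientGroup.mk g)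
    induction q using Quotient.inductionOn' with | h u =>
    have hq' : ((u : G) : G ⧸ C) = (g : G ⧸ C) := hq
    have hc : (u : G)⁻¹ * g ∈ C := (QuotientGroup.eq).1 hq'
    have hc' : x * ((u : G)⁻¹ * g) = ((u : G)⁻¹ * g) * x :=
      Subgroup.mem_centralizer_iff.1 hc x rfl
    have hcomm : ((u : G)⁻¹ * g) * x * ((u : G)⁻¹ * g)⁻¹ = x := by
      rw [← hc']; group
    have hgu : g * x * g⁻¹ = (u : G) * x * (u : G)⁻¹ := by
      calc g * x * g⁻¹
          = (u : G) * (((u : G)⁻¹ * g) * x * ((u : G)⁻¹ * g)⁻¹) * (u : G)⁻¹ := by group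
        _ = (u : G) * x * (u : G)⁻¹ := by rw [hcomm]
    rw [hgu]
    exact mul_mem (mul_mem u.2 hxmemP) (inv_mem u.2)
  -- conclude: normal closure of {x} is a p-group contained in P
  have hNC : Subgroup.normalClosure {x} ≤ (P : Subgroup G) := by
    rw [Subgroup.normalClosure]
    refine (Subgroup.closure_le _).2 ?_
    intro y hy
    obtain ⟨a, ha, hconj⟩ := Group.mem_conjugatesOfSet_iff.1 hy
    rw [Set.mem_singleton_iff] at ha
    subst ha
    obtain ⟨c, hc⟩ := isConj_iff.1 hconj
    rw [← hc]
    exact key c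
  have hNCp : IsPGroup p (Subgroup.normalClosure ({x} : Set G)) :=
    P.isPGroup'.to_le hNC
  have hmem : Subgroup.normalClosure ({x} : Set G) ∈
      {H : Subgroup G | H.Normal ∧ IsPGroup p H} :=
    ⟨Subgroup.normalClosure_normal, hNCp⟩
  exact le_sSup hmem (Subgroup.subset_normalClosure (Set.mem_singleton x))
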